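/- For the vector |φ_{0|0}⟩ = √(3/36)|0⟩ ⊕ √(1/36)(|0⟩+|4⟩−conj(γ₂)|6⟩) ∈ ℂ²⊕ℂ⁹ and the states |ψ_l^{(0)}⟩ as in the paper, the three vectors in ℂ¹¹ obtained by contracting the first factor of |ψ_l^{(0)}⟩ with ⟨φ_{0|0}| (i.e., (⟨φ_{0|0}| ⊗ I)|ψ_l^{(0)}⟩ for l = 0,1,2) are pairwise orthogonal and have equal norms. -/

import Mathlib

open Complex

noncomputable def Xmat (k : ℕ) : Matrix (Fin k) (Fin k) ℂ :=
  fun i j => if (i : ℕ) = ((j : ℕ) + 1) % k then 1 else 0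

noncomputable def Zmat (k : ℕ) : Matrix (Fin k) (Fin k) ℂ :=
  Matrix.diagonal fun l => Complex.exp (2 * Real.pi * Complex.I * (l : ℕ) / (k : ℕ))

noncomputable def PhiME (k : ℕ) : EuclideanSpace ℂ (Fin k × Fin k) :=
  WithLp.toLp 2 fun p => if p.1 = p.2 then ((1 / Real.sqrt k : ℝ) : ℂ) else 0

/-- `|Ψ⟩ = (1/√3)(|0⟩⊗|0⟩+|1⟩⊗|1⟩+|2⟩⊗|2⟩) ∈ ℂ⁹ ⊗ ℂ⁹`. -/
noncomputable def PsiNine : EuclideanSpace ℂ (Fin 9 × Fin 9) :=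
  WithLp.toLp 2 fun p => if p.1 = p.2 ∧ (p.1 : ℕ) < 3 then ((1 / Real.sqrt 3 : ℝ) : ℂ) else 0

noncomputable def opL {k : ℕ} (U : Matrix (Fin k) (Fin k) ℂ)
    (v : EuclideanSpace ℂ (Fin k × Fin k)) : EuclideanSpace ℂ (Fin k × Fin k) :=
  WithLp.toLp 2 fun p => ∑ i, U p.1 i * v (i, p.2)

noncomputable def lift2 (v : EuclideanSpace ℂ (Fin 2 × Fin 2)) :
    EuclideanSpace ℂ (Fin 11 × Fin 11) :=
  WithLp.toLp 2 fun p => if h : (p.1 : ℕ) < 2 ∧ (p.2 : ℕ) < 2 then v (⟨p.1, h.1⟩, ⟨p.2, h.2⟩) else 0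

noncomputable def lift9 (v : EuclideanSpace ℂ (Fin 9 × Fin 9)) :
    EuclideanSpace ℂ (Fin 11 × Fin 11) :=
  WithLp.toLp 2 fun p =>
    if h : 2 ≤ (p.1 : ℕ) ∧ 2 ≤ (p.2 : ℕ) then
      v (⟨(p.1 : ℕ) - 2, by have := p.1.isLt; omega⟩,
         ⟨(p.2 : ℕ) - 2, by have := p.2.isLt; omega⟩)
    else 0

/-- The post-measurement states `|ψ_l^{(0)}⟩`. -/
noncomputable def psiFam0 (γ₁ γ₂ : ℂ) : Fin 3 → EuclideanSpace ℂ (Fin 11 × Fin 11) :=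
  ![(Real.sqrt (2 / 11) : ℂ) • lift2 (PhiME 2)
      + (Real.sqrt (9 / 11) : ℂ) • lift9 PsiNine,
    (Real.sqrt (2 / 11) : ℂ) • (γ₁ • lift2 (opL (Xmat 2) (PhiME 2)))
      + (Real.sqrt (9 / 11) : ℂ) • lift9 (opL (Xmat 9 ^ 3) PsiNine),
    (Real.sqrt (2 / 11) : ℂ) • (γ₂ • lift2 (opL (Zmat 2) (PhiME 2)))
      + (Real.sqrt (9 / 11) : ℂ) • lift9 (opL (Xmat 9 ^ 6) PsiNine)]


/-- Standard basis vector of `ℂ¹¹`. -/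
noncomputable def e11 (i : Fin 11) : EuclideanSpace ℂ (Fin 11) :=
  EuclideanSpace.single i (1 : ℂ)

/-- `|φ_{0|0}⟩ = √(3/36)|0⟩ ⊕ √(1/36)(|0⟩+|4⟩−conj(γ₂)|6⟩)`, with the `ℂ⁹` index `m`
embedded as the 11-index `m + 2`. -/
noncomputable def phi00 (γ₂ : ℂ) : EuclideanSpace ℂ (Fin 11) :=
  (Real.sqrt (3 / 36) : ℂ) • e11 0
    + (Real.sqrt (1 / 36) : ℂ) • (e11 2 + e11 6 - (starRingEnd ℂ γ₂) • e11 8)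

/-- Contraction of the first tensor factor with `⟨φ|`: `(⟨φ| ⊗ I)|ψ⟩`. -/
noncomputable def contractA (φ : EuclideanSpace ℂ (Fin 11))
    (ψ : EuclideanSpace ℂ (Fin 11 × Fin 11)) : EuclideanSpace ℂ (Fin 11) :=
  WithLp.toLp 2 fun j => ∑ i, (starRingEnd ℂ) (φ i) * ψ (i, j)

/-!
Each `|ψ_l^{(0)}⟩` is a sum of five basis kets `|i⟩ ⊗ |j⟩`, and `(⟨φ| ⊗ I)(|i⟩ ⊗ |j⟩) =
conj (φ i) • |j⟩`. As `φ_{0|0}` is supported on `{0, 2, 6, 8}`, exactly two kets of each state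
survive, and the weights of `φ_{0|0}` are such that the `ℂ²` block (`√(3/36) · √(1/11)`) and the
`ℂ⁹` block (`√(1/36) · √(3/11)`) contribute the same amplitude `c = √(1/132)`. The contracted
vectors are `c (|0⟩ + |2⟩)`, `c (γ₁ |1⟩ + |3⟩)` and `c γ₂ (|0⟩ - |2⟩)`: pairwise orthogonal, and
of squared norm `2c² = 1/66` since `|γ₁| = |γ₂| = 1`.
-/

namespace EuclideanSpace

variable {𝕜 ι : Type*} [RCLike 𝕜] [DecidableEq ι]

theorem smul_single (c a : 𝕜) (i : ι) : c • single i a = single i (c * a) := by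
  ext j
  by_cases h : j = i <;> simp [h]

theorem single_zero (i : ι) : single i (0 : 𝕜) = 0 := by
  simp

theorem norm_single_add_single_sq [Fintype ι] {i j : ι} (hij : i ≠ j) (a b : 𝕜) :
    ‖single i a + single j b‖ ^ 2 = ‖a‖ ^ 2 + ‖b‖ ^ 2 := by
  have horth : inner 𝕜 (single i a) (single j b) = 0 := by
    simp [inner_single_left, hij]
  rw [sq, norm_add_sq_eq_norm_sq_add_norm_sq_of_inner_eq_zero _ _ horth, PiLp.norm_single,
    PiLp.norm_single, sq, sq]

end EuclideanSpace

open EuclideanSpace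

theorem ofReal_sqrt_mul_one_div_sqrt {x y z : ℝ} (hx : 0 ≤ x) (h : x / y = z) :
    ((√x : ℝ) : ℂ) * ((1 / √y : ℝ) : ℂ) = ((√z : ℝ) : ℂ) := by
  rw [← ofReal_mul, mul_one_div, ← Real.sqrt_div hx, h]

theorem ofReal_sqrt_mul_sqrt {x y z : ℝ} (hx : 0 ≤ x) (h : x * y = z) :
    ((√x : ℝ) : ℂ) * ((√y : ℝ) : ℂ) = ((√z : ℝ) : ℂ) := by
  rw [← ofReal_mul, ← Real.sqrt_mul hx, h]

theorem sqrt_two_div_eleven_mul_one_div_sqrt_two :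
    ((√(2 / 11) : ℝ) : ℂ) * ((1 / √2 : ℝ) : ℂ) = ((√(1 / 11) : ℝ) : ℂ) :=
  ofReal_sqrt_mul_one_div_sqrt (by norm_num) (by norm_num)

theorem sqrt_nine_div_eleven_mul_one_div_sqrt_three :
    ((√(9 / 11) : ℝ) : ℂ) * ((1 / √3 : ℝ) : ℂ) = ((√(3 / 11) : ℝ) : ℂ) :=
  ofReal_sqrt_mul_one_div_sqrt (by norm_num) (by norm_num)

theorem sqrt_three_div_thirtysix_mul_sqrt_one_div_eleven :
    ((√(3 / 36) : ℝ) : ℂ) * ((√(1 / 11) : ℝ) : ℂ) = ((√(1 / 132) : ℝ) : ℂ) :=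
  ofReal_sqrt_mul_sqrt (by norm_num) (by norm_num)

theorem sqrt_one_div_thirtysix_mul_sqrt_three_div_eleven :
    ((√(1 / 36) : ℝ) : ℂ) * ((√(3 / 11) : ℝ) : ℂ) = ((√(1 / 132) : ℝ) : ℂ) :=
  ofReal_sqrt_mul_sqrt (by norm_num) (by norm_num)

section Contraction

variable (φ : EuclideanSpace ℂ (Fin 11))

theorem contractA_add (ψ ψ' : EuclideanSpace ℂ (Fin 11 × Fin 11)) :
    contractA φ (ψ + ψ') = contractA φ ψ + contractA φ ψ' := by
  ext j
  simp [contractA, mul_add, Finset.sum_add_distrib]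

theorem contractA_single (i j : Fin 11) (c : ℂ) :
    contractA φ (single (i, j) c) = single j (starRingEnd ℂ (φ i) * c) := by
  ext k
  by_cases h : k = j <;> simp [contractA, h]

end Contraction

theorem lift2_add (v w : EuclideanSpace ℂ (Fin 2 × Fin 2)) :
    lift2 (v + w) = lift2 v + lift2 w := by
  ext p
  simp only [lift2, PiLp.toLp_apply, PiLp.add_apply]
  split_ifs <;> simp

theorem lift2_single (i j : Fin 2) (c : ℂ) :
    lift2 (single (i, j) c) = single (⟨i, by omega⟩, ⟨j, by omega⟩) c := by
  ext ⟨a, b⟩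
  simp only [lift2, PiLp.toLp_apply, PiLp.single_apply, Prod.ext_iff, Fin.ext_iff]
  split_ifs <;> first | rfl | omega

theorem lift9_add (v w : EuclideanSpace ℂ (Fin 9 × Fin 9)) :
    lift9 (v + w) = lift9 v + lift9 w := by
  ext p
  simp only [lift9, PiLp.toLp_apply, PiLp.add_apply]
  split_ifs <;> simp

theorem lift9_single (i j : Fin 9) (c : ℂ) :
    lift9 (single (i, j) c) = single (⟨i + 2, by omega⟩, ⟨j + 2, by omega⟩) c := by
  ext ⟨a, b⟩
  simp only [lift9, PiLp.toLp_apply, PiLp.single_apply, Prod.ext_iff, Fin.ext_iff]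
  split_ifs <;> first | rfl | omega

theorem opL_add {k : ℕ} (U : Matrix (Fin k) (Fin k) ℂ)
    (v w : EuclideanSpace ℂ (Fin k × Fin k)) :
    opL U (v + w) = opL U v + opL U w := by
  ext p
  simp [opL, mul_add, Finset.sum_add_distrib]

theorem opL_diagonal_single {k : ℕ} (d : Fin k → ℂ) (i j : Fin k) (c : ℂ) :
    opL (Matrix.diagonal d) (single (i, j) c) = single (i, j) (d i * c) := by
  ext ⟨a, b⟩
  by_cases ha : a = i <;> by_cases hb : b = j <;> simp [opL, Matrix.diagonal_apply, ha, hb]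

noncomputable def shiftMat (k s : ℕ) : Matrix (Fin k) (Fin k) ℂ :=
  fun i j => if (i : ℕ) = ((j : ℕ) + s) % k then 1 else 0

theorem Xmat_eq_shiftMat (k : ℕ) : Xmat k = shiftMat k 1 := rfl

theorem shiftMat_zero (k : ℕ) : shiftMat k 0 = 1 := by
  ext i j
  simp [shiftMat, Matrix.one_apply, Nat.mod_eq_of_lt j.isLt, Fin.ext_iff]

theorem shiftMat_mul (k a b : ℕ) [NeZero k] :
    shiftMat k a * shiftMat k b = shiftMat k (a + b) := by
  ext i j
  rw [Matrix.mul_apply, Finset.sum_eq_single ⟨(j + b) % k, Nat.mod_lt _ (NeZero.pos k)⟩]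
  · simp [shiftMat, Nat.mod_add_mod, Nat.add_assoc, Nat.add_comm a b]
  · intro m _ hm
    have hmj : (m : ℕ) ≠ (j + b) % k := fun h => hm (Fin.ext h)
    simp [shiftMat, hmj]
  · simp

theorem shiftMat_one_pow (k s : ℕ) [NeZero k] : shiftMat k 1 ^ s = shiftMat k s := by
  induction s with
  | zero => rw [pow_zero, shiftMat_zero]
  | succ s ih => rw [pow_succ, ih, shiftMat_mul]

theorem opL_shiftMat_single {k : ℕ} [NeZero k] (s : ℕ) (i j : Fin k) (c : ℂ) :
    opL (shiftMat k s) (single (i, j) c) =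
      single (⟨(i + s) % k, Nat.mod_lt _ (NeZero.pos k)⟩, j) c := by
  ext ⟨a, b⟩
  simp only [opL, shiftMat, PiLp.toLp_apply, PiLp.single_apply, Prod.mk.injEq]
  rw [Finset.sum_eq_single i (fun m _ hm => by simp [hm]) (by simp)]
  by_cases hb : b = j <;> simp [hb, Fin.ext_iff]

theorem Zmat_two : Zmat 2 = Matrix.diagonal ![1, -1] := by
  ext i j
  fin_cases i <;> fin_cases j <;> simp [Zmat, Matrix.diagonal]
  rw [show 2 * (Real.pi : ℂ) * I / 2 = Real.pi * I by ring, exp_pi_mul_I]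

theorem PhiME_two :
    PhiME 2 = single (0, 0) ((1 / √2 : ℝ) : ℂ) + single (1, 1) ((1 / √2 : ℝ) : ℂ) := by
  ext ⟨a, b⟩
  fin_cases a <;> fin_cases b <;> simp [PhiME]

theorem PsiNine_eq : PsiNine = single (0, 0) ((1 / √3 : ℝ) : ℂ)
    + single (1, 1) ((1 / √3 : ℝ) : ℂ) + single (2, 2) ((1 / √3 : ℝ) : ℂ) := by
  ext ⟨a, b⟩
  simp only [PsiNine, PiLp.toLp_apply, PiLp.add_apply, PiLp.single_apply, Prod.mk.injEq,
    Fin.ext_iff]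
  split_ifs <;> simp <;> omega

theorem psiFam0_zero (γ₁ γ₂ : ℂ) : psiFam0 γ₁ γ₂ 0 =
    single (0, 0) ((√(1 / 11) : ℝ) : ℂ) + single (1, 1) ((√(1 / 11) : ℝ) : ℂ)
      + (single (2, 2) ((√(3 / 11) : ℝ) : ℂ) + single (3, 3) ((√(3 / 11) : ℝ) : ℂ)
        + single (4, 4) ((√(3 / 11) : ℝ) : ℂ)) := by
  simp only [psiFam0, Matrix.cons_val_zero, PhiME_two, PsiNine_eq, lift2_add, lift2_single,
    lift9_add, lift9_single, smul_add, smul_single, sqrt_two_div_eleven_mul_one_div_sqrt_two,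
    sqrt_nine_div_eleven_mul_one_div_sqrt_three]
  rfl

theorem psiFam0_one (γ₁ γ₂ : ℂ) : psiFam0 γ₁ γ₂ 1 =
    single (1, 0) (γ₁ * (√(1 / 11) : ℝ)) + single (0, 1) (γ₁ * (√(1 / 11) : ℝ))
      + (single (5, 2) ((√(3 / 11) : ℝ) : ℂ) + single (6, 3) ((√(3 / 11) : ℝ) : ℂ)
        + single (7, 4) ((√(3 / 11) : ℝ) : ℂ)) := by
  simp only [psiFam0, Matrix.cons_val_one, Matrix.cons_val_zero, PhiME_two, PsiNine_eq,
    Xmat_eq_shiftMat, shiftMat_one_pow, opL_add, opL_shiftMat_single, lift2_add, lift2_single,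
    lift9_add, lift9_single, smul_add, smul_single, mul_left_comm _ γ₁,
    sqrt_two_div_eleven_mul_one_div_sqrt_two, sqrt_nine_div_eleven_mul_one_div_sqrt_three]
  rfl

theorem psiFam0_two (γ₁ γ₂ : ℂ) : psiFam0 γ₁ γ₂ 2 =
    single (0, 0) (γ₂ * (√(1 / 11) : ℝ)) + single (1, 1) (-(γ₂ * (√(1 / 11) : ℝ)))
      + (single (8, 2) ((√(3 / 11) : ℝ) : ℂ) + single (9, 3) ((√(3 / 11) : ℝ) : ℂ)
        + single (10, 4) ((√(3 / 11) : ℝ) : ℂ)) := by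
  simp only [psiFam0, Matrix.cons_val_two, Matrix.cons_val_one, Matrix.cons_val_zero,
    Matrix.tail_cons, Matrix.head_cons, one_mul, neg_one_mul, mul_neg, PhiME_two, PsiNine_eq,
    Xmat_eq_shiftMat, shiftMat_one_pow, Zmat_two, opL_add, opL_shiftMat_single,
    opL_diagonal_single, lift2_add, lift2_single, lift9_add, lift9_single, smul_add, smul_single,
    mul_left_comm _ γ₂, sqrt_two_div_eleven_mul_one_div_sqrt_two,
    sqrt_nine_div_eleven_mul_one_div_sqrt_three]
  rfl

theorem contractA_phi00_psiFam0_zero (γ₁ γ₂ : ℂ) : contractA (phi00 γ₂) (psiFam0 γ₁ γ₂ 0) =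
    single 0 ((√(1 / 132) : ℝ) : ℂ) + single 2 ((√(1 / 132) : ℝ) : ℂ) := by
  simp only [psiFam0_zero, contractA_add, contractA_single, phi00, e11, PiLp.add_apply,
    PiLp.smul_apply, PiLp.sub_apply, PiLp.single_apply, smul_eq_mul, Fin.reduceEq, if_true,
    if_false, mul_one, mul_zero, add_zero, sub_zero, map_zero, conj_ofReal, zero_mul,
    single_zero, zero_add]
  rw [sqrt_three_div_thirtysix_mul_sqrt_one_div_eleven,
    sqrt_one_div_thirtysix_mul_sqrt_three_div_eleven]

theorem contractA_phi00_psiFam0_one (γ₁ γ₂ : ℂ) : contractA (phi00 γ₂) (psiFam0 γ₁ γ₂ 1) =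
    single 1 (γ₁ * (√(1 / 132) : ℝ)) + single 3 ((√(1 / 132) : ℝ) : ℂ) := by
  simp only [psiFam0_one, contractA_add, contractA_single, phi00, e11, PiLp.add_apply,
    PiLp.smul_apply, PiLp.sub_apply, PiLp.single_apply, smul_eq_mul, Fin.reduceEq, if_true,
    if_false, mul_one, mul_zero, add_zero, sub_zero, map_zero, conj_ofReal, zero_mul,
    single_zero, zero_add]
  rw [mul_left_comm, sqrt_three_div_thirtysix_mul_sqrt_one_div_eleven,
    sqrt_one_div_thirtysix_mul_sqrt_three_div_eleven]

theorem contractA_phi00_psiFam0_two (γ₁ γ₂ : ℂ) : contractA (phi00 γ₂) (psiFam0 γ₁ γ₂ 2) =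
    single 0 (γ₂ * (√(1 / 132) : ℝ)) + single 2 (-(γ₂ * (√(1 / 132) : ℝ))) := by
  simp only [psiFam0_two, contractA_add, contractA_single, phi00, e11, PiLp.add_apply,
    PiLp.smul_apply, PiLp.sub_apply, PiLp.single_apply, smul_eq_mul, Fin.reduceEq, if_true,
    if_false, mul_one, mul_zero, add_zero, sub_zero, zero_sub, map_zero, map_neg, map_mul,
    conj_ofReal, conj_conj, zero_mul, single_zero, zero_add]
  congr 2
  · linear_combination γ₂ * sqrt_three_div_thirtysix_mul_sqrt_one_div_eleven
  · linear_combination -γ₂ * sqrt_one_div_thirtysix_mul_sqrt_three_div_eleven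

theorem norm_contractA_phi00_psiFam0_sq {γ₁ γ₂ : ℂ} (h₁ : ‖γ₁‖ = 1) (h₂ : ‖γ₂‖ = 1)
    (l : Fin 3) : ‖contractA (phi00 γ₂) (psiFam0 γ₁ γ₂ l)‖ ^ 2 = 1 / 66 := by
  have hc : ‖((√(1 / 132) : ℝ) : ℂ)‖ ^ 2 = 1 / 132 := by
    rw [norm_real, Real.norm_eq_abs, sq_abs, Real.sq_sqrt (by norm_num)]
  fin_cases l <;>
    simp only [Fin.zero_eta, Fin.mk_one, Fin.reduceFinMk, contractA_phi00_psiFam0_zero,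
      contractA_phi00_psiFam0_one, contractA_phi00_psiFam0_two]
  all_goals
    rw [norm_single_add_single_sq (by decide)]
    simp only [norm_mul, norm_neg, h₁, h₂, one_mul, hc]
    norm_num

theorem inner_contractA_phi00_psiFam0_eq_zero (γ₁ γ₂ : ℂ) {l m : Fin 3} (hlm : l ≠ m) :
    inner ℂ (contractA (phi00 γ₂) (psiFam0 γ₁ γ₂ l))
      (contractA (phi00 γ₂) (psiFam0 γ₁ γ₂ m)) = 0 := by
  fin_cases l <;> fin_cases m <;> (try exact absurd rfl hlm) <;>
    simp [contractA_phi00_psiFam0_zero, contractA_phi00_psiFam0_one,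
      contractA_phi00_psiFam0_two, inner_single_left]

/-- The three vectors `(⟨φ_{0|0}| ⊗ I)|ψ_l^{(0)}⟩`, `l = 0,1,2`, are pairwise orthogonal
and have equal norms. -/
theorem contracted_states_orthogonal_equal_norm (γ₁ γ₂ : ℂ) (h₁ : ‖γ₁‖ = 1) (h₂ : ‖γ₂‖ = 1) :
    (∀ l m : Fin 3, l ≠ m →
      (inner ℂ (contractA (phi00 γ₂) (psiFam0 γ₁ γ₂ l))
        (contractA (phi00 γ₂) (psiFam0 γ₁ γ₂ m)) : ℂ) = 0) ∧
    (∀ l m : Fin 3,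
      ‖contractA (phi00 γ₂) (psiFam0 γ₁ γ₂ l)‖ = ‖contractA (phi00 γ₂) (psiFam0 γ₁ γ₂ m)‖) := by
  refine ⟨fun l m hlm => inner_contractA_phi00_psiFam0_eq_zero γ₁ γ₂ hlm, fun l m => ?_⟩
  rw [← sq_eq_sq₀ (norm_nonneg _) (norm_nonneg _), norm_contractA_phi00_psiFam0_sq h₁ h₂,
    norm_contractA_phi00_psiFam0_sq h₁ h₂]
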